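/- arXiv:0912.3056 — 4 statements merged into one kernel-verified Lean document; each statement's English description precedes it below -/
import Mathlib

section
/- Let h : ℝ → ℂ be continuous and bounded, m ∈ ℕ with m ≥ 1, and define φ_{m,h}(λ, μ) = ∫₀¹ t^{m-1} h(λ + (μ - λ)t) dt. Then for all real λ ≤ ξ ≤ μ with λ ≠ μ, setting ζ = (λ - ξ)/(λ - μ) and ω = (ξ - μ)/(λ - μ), one has φ_{m,h}(λ, μ) = ζ^m φ_{m,h}(λ, ξ) + ω^m φ_{m,h}(ξ, μ) + ∑_{k=1}^{m-1} C(m-1, k-1) ζ^{m-k} ω^k φ_{k,h}(ξ, μ). -/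
open MeasureTheory

/-- `φ_{m,h}(λ, μ) = ∫₀¹ t^(m-1) h(λ + (μ-λ)t) dt`. -/
noncomputable def phiMH (h : ℝ → ℂ) (m : ℕ) (l mu : ℝ) : ℂ :=
  ∫ t in (0:ℝ)..1, (t : ℂ) ^ (m - 1) * h (l + (mu - l) * t)

lemma phiMH_key (h : ℝ → ℂ) (m : ℕ) (hm : 1 ≤ m) (a b : ℝ) :
    (∫ s in a..b, ((s - a : ℝ) : ℂ) ^ (m - 1) * h s)
      = ((b - a : ℝ) : ℂ) ^ m * phiMH h m a b := by
  rcases eq_or_ne a b with rfl | hab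
  · simp [zero_pow (by omega : m ≠ 0)]
  · have hba : (b - a) ≠ 0 := sub_ne_zero.mpr (Ne.symm hab)
    have hbaC : ((b - a : ℝ) : ℂ) ≠ 0 := by exact_mod_cast hba
    have key := intervalIntegral.integral_comp_mul_add
      (a := (0:ℝ)) (b := 1)
      (f := fun s => ((((s - a) / (b - a)) : ℝ) : ℂ) ^ (m - 1) * h s) hba a
    simp only [mul_zero, zero_add, mul_one, sub_add_cancel] at key
    have h1 : phiMH h m a b
        = ∫ t in (0:ℝ)..1,
            (fun s => ((((s - a) / (b - a)) : ℝ) : ℂ) ^ (m - 1) * h s) ((b - a) * t + a) := by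
      unfold phiMH
      refine intervalIntegral.integral_congr fun t _ => ?_
      simp only
      rw [add_sub_cancel_right, mul_div_cancel_left₀ _ hba]
      ring_nf
    have h2 : (∫ s in a..b, ((((s - a) / (b - a)) : ℝ) : ℂ) ^ (m - 1) * h s)
        = (((b - a : ℝ) : ℂ) ^ (m - 1))⁻¹ * ∫ s in a..b, ((s - a : ℝ) : ℂ) ^ (m - 1) * h s := by
      rw [← intervalIntegral.integral_const_mul]
      refine intervalIntegral.integral_congr fun s _ => ?_
      push_cast
      rw [div_pow]
      field_simp
    rw [h1, key, h2]
    have hmm : m = (m - 1) + 1 := (Nat.succ_pred_eq_of_pos hm).symm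
    rw [Complex.real_smul]
    push_cast
    rw [hmm, pow_succ]
    have hbaC2 : ((b:ℂ) - a) ≠ 0 := by push_cast at hbaC; exact hbaC
    field_simp
    try rw [eq_div_iff (mul_ne_zero hbaC2 (pow_ne_zero _ hbaC2))]
    simp only [Nat.add_sub_cancel]

theorem stmt1 (h : ℝ → ℂ) (hc : Continuous h) (hb : ∃ C, ∀ t, ‖h t‖ ≤ C)
    (m : ℕ) (hm : 1 ≤ m) (l xi mu : ℝ) (h1 : l ≤ xi) (h2 : xi ≤ mu) (hne : l ≠ mu)
    (ζ ω : ℝ) (hζ : ζ = (l - xi) / (l - mu)) (hω : ω = (xi - mu) / (l - mu)) :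
    phiMH h m l mu =
      (ζ : ℂ) ^ m * phiMH h m l xi + (ω : ℂ) ^ m * phiMH h m xi mu +
        ∑ k ∈ Finset.Icc 1 (m - 1),
          ((m - 1).choose (k - 1) : ℂ) * (ζ : ℂ) ^ (m - k) * (ω : ℂ) ^ k *
            phiMH h k xi mu := by
  obtain ⟨n, rfl⟩ : ∃ n, m = n + 1 := ⟨m - 1, (Nat.succ_pred_eq_of_pos hm).symm⟩
  have hml : mu - l ≠ 0 := sub_ne_zero.mpr (Ne.symm hne)
  have hA : ((mu - l : ℝ) : ℂ) ≠ 0 := by exact_mod_cast hml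
  have hcont : ∀ (c : ℝ) (j : ℕ), Continuous fun s : ℝ => ((s - c : ℝ) : ℂ) ^ j * h s := by
    intro c j
    exact ((Complex.continuous_ofReal.comp (continuous_id.sub continuous_const)).pow j).mul hc
  have hint : ∀ (c : ℝ) (j : ℕ) (x y : ℝ),
      IntervalIntegrable (fun s : ℝ => ((s - c : ℝ) : ℂ) ^ j * h s) volume x y :=
    fun c j x y => (hcont c j).intervalIntegrable x y
  have split : (∫ s in l..mu, ((s - l : ℝ) : ℂ) ^ n * h s)
      = (∫ s in l..xi, ((s - l : ℝ) : ℂ) ^ n * h s)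
        + ∫ s in xi..mu, ((s - l : ℝ) : ℂ) ^ n * h s :=
    (intervalIntegral.integral_add_adjacent_intervals (hint l n l xi) (hint l n xi mu)).symm
  have expand : (∫ s in xi..mu, ((s - l : ℝ) : ℂ) ^ n * h s)
      = ∑ j ∈ Finset.range (n + 1),
          (((xi - l : ℝ) : ℂ) ^ (n - j) * (n.choose j : ℂ))
            * ∫ s in xi..mu, ((s - xi : ℝ) : ℂ) ^ j * h s := by
    simp_rw [← intervalIntegral.integral_const_mul]
    rw [← intervalIntegral.integral_finset_sum (fun j _ => ((hint xi j xi mu).const_mul _))]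
    refine intervalIntegral.integral_congr fun s _ => ?_
    have e : ((s - l : ℝ) : ℂ) = ((s - xi : ℝ) : ℂ) + ((xi - l : ℝ) : ℂ) := by push_cast; ring
    rw [e, add_pow, Finset.sum_mul]
    refine Finset.sum_congr rfl fun j _ => ?_
    ring
  have keym := phiMH_key h (n+1) (by omega) l mu
  have keyx := phiMH_key h (n+1) (by omega) l xi
  simp only [Nat.add_sub_cancel] at keym keyx
  rw [keym, keyx] at split
  have expand' : (∫ s in xi..mu, ((s - l : ℝ) : ℂ) ^ n * h s)
      = ∑ j ∈ Finset.range (n + 1),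
          (((xi - l : ℝ) : ℂ) ^ (n - j) * (n.choose j : ℂ))
            * (((mu - xi : ℝ) : ℂ) ^ (j+1) * phiMH h (j+1) xi mu) := by
    rw [expand]
    refine Finset.sum_congr rfl fun j _ => ?_
    congr 1
    have := phiMH_key h (j+1) (by omega) xi mu
    simpa using this
  rw [expand'] at split
  have hζ' : (ζ : ℂ) * ((mu - l : ℝ) : ℂ) = ((xi - l : ℝ) : ℂ) := by
    have hlm : (l : ℂ) - (mu : ℂ) ≠ 0 := sub_ne_zero.mpr (by exact_mod_cast hne)
    rw [hζ]; push_cast; field_simp; ring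
  have hω' : (ω : ℂ) * ((mu - l : ℝ) : ℂ) = ((mu - xi : ℝ) : ℂ) := by
    have hlm : (l : ℂ) - (mu : ℂ) ≠ 0 := sub_ne_zero.mpr (by exact_mod_cast hne)
    rw [hω]; push_cast; field_simp; ring
  apply mul_left_cancel₀ (pow_ne_zero (n+1) hA)
  rw [split]
  -- reindex the Icc sum on the RHS
  have hIcc : Finset.Icc 1 (n + 1 - 1) = Finset.Ico 1 (n + 1) := by
    rw [Nat.add_sub_cancel, ← Finset.Ico_add_one_right_eq_Icc]
  rw [hIcc, Finset.sum_Ico_eq_sum_range]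
  simp only [Nat.add_sub_cancel]
  -- peel off the last term of the range (n+1) sum
  rw [Finset.sum_range_succ]
  have e1 : ((xi - l : ℝ) : ℂ) ^ (n+1) * phiMH h (n+1) l xi
      = ((mu - l : ℝ) : ℂ) ^ (n+1) * ((ζ:ℂ) ^ (n+1) * phiMH h (n+1) l xi) := by
    rw [← mul_assoc, ← mul_pow, mul_comm (((mu - l : ℝ)):ℂ) (ζ:ℂ), hζ']
  have e2 : (((xi - l : ℝ) : ℂ) ^ (n - n) * (n.choose n : ℂ))
        * (((mu - xi : ℝ) : ℂ) ^ (n+1) * phiMH h (n+1) xi mu)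
      = ((mu - l : ℝ) : ℂ) ^ (n+1) * ((ω:ℂ) ^ (n+1) * phiMH h (n+1) xi mu) := by
    rw [Nat.sub_self, Nat.choose_self, ← mul_assoc ((((mu - l : ℝ)):ℂ)^(n+1)),
      ← mul_pow, mul_comm (((mu - l : ℝ)):ℂ) (ω:ℂ), hω']
    simp
  have e3 : ∑ j ∈ Finset.range n,
        (((xi - l : ℝ) : ℂ) ^ (n - j) * (n.choose j : ℂ))
          * (((mu - xi : ℝ) : ℂ) ^ (j+1) * phiMH h (j+1) xi mu)
      = ∑ j ∈ Finset.range n,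
          ((mu - l : ℝ) : ℂ) ^ (n+1) *
            ((n.choose (1 + j - 1) : ℂ) * (ζ:ℂ) ^ (n + 1 - (1 + j)) * (ω:ℂ) ^ (1 + j) *
              phiMH h (1 + j) xi mu) := by
    refine Finset.sum_congr rfl fun j hj => ?_
    have hjn : j < n := Finset.mem_range.mp hj
    have h1j : 1 + j - 1 = j := by omega
    have h2j : n + 1 - (1 + j) = n - j := by omega
    have h3j : 1 + j = j + 1 := by omega
    rw [h1j, h2j, h3j]
    have epow : ((mu - l : ℝ) : ℂ) ^ (n+1)
        = ((mu - l : ℝ) : ℂ) ^ (n - j) * ((mu - l : ℝ) : ℂ) ^ (j+1) := by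
      rw [← pow_add]; congr 1; omega
    rw [epow]
    have f1 : ((mu - l : ℝ) : ℂ) ^ (n - j) * (ζ:ℂ) ^ (n - j) = ((xi - l : ℝ) : ℂ) ^ (n - j) := by
      rw [← mul_pow, mul_comm, hζ']
    have f2 : ((mu - l : ℝ) : ℂ) ^ (j+1) * (ω:ℂ) ^ (j+1) = ((mu - xi : ℝ) : ℂ) ^ (j+1) := by
      rw [← mul_pow, mul_comm, hω']
    calc (((xi - l : ℝ) : ℂ) ^ (n - j) * (n.choose j : ℂ))
          * (((mu - xi : ℝ) : ℂ) ^ (j+1) * phiMH h (j+1) xi mu)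
        = ((((mu - l : ℝ) : ℂ) ^ (n - j) * (ζ:ℂ) ^ (n - j)) * (n.choose j : ℂ))
          * ((((mu - l : ℝ) : ℂ) ^ (j+1) * (ω:ℂ) ^ (j+1)) * phiMH h (j+1) xi mu) := by
          rw [f1, f2]
      _ = ((mu - l : ℝ) : ℂ) ^ (n - j) * ((mu - l : ℝ) : ℂ) ^ (j+1) *
            ((n.choose j : ℂ) * (ζ:ℂ) ^ (n - j) * (ω:ℂ) ^ (j+1) * phiMH h (j+1) xi mu) := by
          ring
  rw [e1, e2, e3, ← Finset.mul_sum]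
  ring
end

section
/- Let f : ℝ → ℂ be n times continuously differentiable. Then the n-th divided difference f^[n] equals the simplex integral φ_{n,f^{(n)},1}(λ₀, ..., λₙ) = ∫_{Sₙ} f^{(n)}(∑_{j=0}^n sⱼ λⱼ) dσₙ, where Sₙ = {(s₀,...,sₙ) : sⱼ ≥ 0, ∑ sⱼ = 1} carries the measure dσₙ defined by projecting onto the first n coordinates with Lebesgue measure. -/
open MeasureTheory

/-- The `n`-th order divided difference, defined recursively. -/
noncomputable def dd (f : ℝ → ℂ) : (n : ℕ) → (Fin (n + 1) → ℝ) → ℂ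
  | 0, l => f (l 0)
  | n + 1, l =>
    if l 0 = l 1 then
      deriv (fun x => dd f n (fun i => if i = 0 then x else l i.succ)) (l 1)
    else
      (dd f n (fun i => if i = 0 then l 0 else l i.succ) -
        dd f n (fun i => if i = 0 then l 1 else l i.succ)) / (((l 0 : ℂ)) - ((l 1 : ℂ)))

/-- The corner simplex `Rₙ = {s : sⱼ ≥ 0, ∑ sⱼ ≤ 1}` in `ℝⁿ`. -/
def Rset (n : ℕ) : Set (Fin n → ℝ) :=
  {s | (∀ j, 0 ≤ s j) ∧ ∑ j, s j ≤ 1}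

/-- Extend `s ∈ Rₙ` to a point `(s₀, …, s_{n-1}, 1 - ∑ sⱼ)` of the simplex `Sₙ`. -/
noncomputable def simplexExt (n : ℕ) (s : Fin n → ℝ) : Fin (n + 1) → ℝ :=
  Fin.snoc s (1 - ∑ j, s j)

open Set

noncomputable def ES (n : ℕ) (l : Fin (n + 1) → ℝ) (s : Fin n → ℝ) : ℝ :=
  ∑ j, simplexExt n s j * l j

noncomputable def Psi (n : ℕ) (g : ℝ → ℂ) (l : Fin (n + 1) → ℝ) : ℂ :=
  ∫ s in Rset n, g (ES n l s)

lemma ES_apply (n : ℕ) (l : Fin (n + 1) → ℝ) (s : Fin n → ℝ) :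
    ES n l s = (∑ j : Fin n, s j * l j.castSucc) + (1 - ∑ j, s j) * l (Fin.last n) := by
  rw [ES, Fin.sum_univ_castSucc]
  simp [simplexExt]

lemma ES_cons (n : ℕ) (l : Fin (n + 2) → ℝ) (t : ℝ) (s : Fin n → ℝ) :
    ES (n + 1) l (Fin.cons t s) = ES n (fun j => l j.succ) s + t * (l 0 - l (Fin.last (n + 1))) := by
  rw [ES_apply, ES_apply, Fin.sum_univ_succ, Fin.sum_univ_succ]
  simp only [Fin.cons_zero, Fin.cons_succ, Fin.castSucc_zero]
  have : ∀ j : Fin n, l (Fin.succ (Fin.castSucc j)) = l j.succ.castSucc := by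
    exact fun j => congrArg l (Fin.succ_castSucc j)
  have h2 : l (Fin.succ (Fin.last n)) = l (Fin.last (n+1)) := by
    congr 1
  simp only [this, h2]
  ring

lemma measurableSet_Rset (n : ℕ) : MeasurableSet (Rset n) := by
  have : Rset n = (⋂ j, {s : Fin n → ℝ | 0 ≤ s j}) ∩ {s | ∑ j, s j ≤ 1} := by
    ext s; simp [Rset]
  rw [this]
  exact (MeasurableSet.iInter fun j => measurableSet_le measurable_const (measurable_pi_apply j)).inter
    (measurableSet_le (Finset.measurable_sum _ fun j _ => measurable_pi_apply j) measurable_const)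

lemma isCompact_Rset (n : ℕ) : IsCompact (Rset n) := by
  have hsub : Rset n ⊆ Set.pi Set.univ (fun _ : Fin n => Icc (0:ℝ) 1) := by
    intro s hs j _
    refine ⟨hs.1 j, ?_⟩
    calc s j ≤ ∑ i, s i := Finset.single_le_sum (fun i _ => hs.1 i) (Finset.mem_univ j)
    _ ≤ 1 := hs.2
  have hclosed : IsClosed (Rset n) := by
    have : Rset n = (⋂ j, {s : Fin n → ℝ | 0 ≤ s j}) ∩ {s | ∑ j, s j ≤ 1} := by
      ext s; simp [Rset]
    rw [this]
    exact ((isClosed_iInter fun j => isClosed_le continuous_const (continuous_apply j))).inter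
      (isClosed_le (by continuity) continuous_const)
  exact (isCompact_univ_pi fun _ => isCompact_Icc).of_isClosed_subset hclosed hsub

lemma cons_mem_Rset_iff {n : ℕ} {s : Fin n → ℝ} (hs : ∀ j, 0 ≤ s j) (t : ℝ) :
    Fin.cons t s ∈ Rset (n + 1) ↔ t ∈ Icc 0 (1 - ∑ j, s j) := by
  simp only [Rset, mem_setOf_eq, Fin.forall_fin_succ, Fin.cons_zero, Fin.cons_succ,
    Fin.sum_univ_succ, mem_Icc]
  constructor
  · rintro ⟨⟨h0, _⟩, hsum⟩; exact ⟨h0, by linarith⟩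
  · rintro ⟨h0, h1⟩; exact ⟨⟨h0, fun j => hs j⟩, by linarith⟩

lemma esymm {n : ℕ} (p : ℝ × (Fin n → ℝ)) :
    (MeasurableEquiv.piFinSuccAbove (fun _ : Fin (n + 1) => ℝ) 0).symm p = Fin.cons p.1 p.2 := by
  simp only [MeasurableEquiv.piFinSuccAbove_symm_apply]
  ext i
  cases i using Fin.cases <;> simp [Fin.insertNthEquiv]

lemma peel (n : ℕ) (F : (Fin (n + 1) → ℝ) → ℂ) (hF : Continuous F) :
    ∫ s in Rset (n + 1), F s
      = ∫ s in Rset n, ∫ t in Ioc (0:ℝ) (1 - ∑ j, s j), F (Fin.cons t s) := by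
  have hInt : IntegrableOn F (Rset (n + 1)) := by
    exact hF.continuousOn.integrableOn_compact (isCompact_Rset _)
  have hind : Integrable ((Rset (n + 1)).indicator F) := by
    rwa [integrable_indicator_iff (measurableSet_Rset _)]
  have mp := (volume_preserving_piFinSuccAbove (fun _ : Fin (n + 1) => ℝ) 0).symm
  have key : ∫ s, (Rset (n + 1)).indicator F s
      = ∫ p : ℝ × (Fin n → ℝ), (Rset (n + 1)).indicator F (Fin.cons p.1 p.2) := by
    rw [← mp.integral_comp (MeasurableEquiv.measurableEmbedding _) ((Rset (n + 1)).indicator F)]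
    exact integral_congr_ae (Filter.Eventually.of_forall fun p => by simp only [esymm])
  have hind2 : Integrable fun p : ℝ × (Fin n → ℝ) => (Rset (n + 1)).indicator F (Fin.cons p.1 p.2) := by
    have := (mp.integrable_comp_emb (MeasurableEquiv.measurableEmbedding _)).2 hind
    refine this.congr (Filter.Eventually.of_forall fun p => ?_)
    rw [Function.comp_apply, esymm]
  rw [← integral_indicator (measurableSet_Rset _), key]
  rw [Measure.volume_eq_prod] at hind2 ⊢
  rw [integral_prod_symm _ hind2]
  rw [← integral_indicator (measurableSet_Rset _)]
  congr 1
  ext s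
  by_cases hs : s ∈ Rset n
  · rw [indicator_of_mem hs]
    have h1 : ∀ t : ℝ, (Rset (n + 1)).indicator F (Fin.cons t s)
        = (Icc (0:ℝ) (1 - ∑ j, s j)).indicator (fun t => F (Fin.cons t s)) t := by
      intro t
      by_cases ht : Fin.cons t s ∈ Rset (n + 1)
      · rw [indicator_of_mem ht, indicator_of_mem ((cons_mem_Rset_iff hs.1 t).1 ht)]
      · rw [indicator_of_notMem ht, indicator_of_notMem]
        exact fun h => ht ((cons_mem_Rset_iff hs.1 t).2 h)
    simp_rw [h1]
    rw [integral_indicator measurableSet_Icc, integral_Icc_eq_integral_Ioc]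
  · rw [indicator_of_notMem hs]
    have : ∀ t : ℝ, (Rset (n + 1)).indicator F (Fin.cons t s) = 0 := by
      intro t
      apply indicator_of_notMem
      intro h
      rcases h with ⟨hpos, hsum⟩
      apply hs
      refine ⟨fun j => hpos j.succ, ?_⟩
      rw [Fin.sum_univ_succ] at hsum
      have := hpos 0
      simp only [Fin.cons_zero, Fin.cons_succ] at hsum this
      linarith
    simp [this]

lemma swap_tri (h : ℝ → ℝ → ℂ) (hc : Continuous fun p : ℝ × ℝ => h p.1 p.2) (u : ℝ) :
    ∫ t in Ioc (0:ℝ) u, ∫ v in Ioc t u, h t v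
      = ∫ v in Ioc (0:ℝ) u, ∫ t in Ioc (0:ℝ) v, h t v := by
  set S : Set (ℝ × ℝ) := {p | 0 < p.1 ∧ p.1 < p.2 ∧ p.2 ≤ u} with hS
  have hSm : MeasurableSet S := by
    apply MeasurableSet.inter
    · exact measurableSet_lt measurable_const measurable_fst
    · exact (measurableSet_lt measurable_fst measurable_snd).inter
        (measurableSet_le measurable_snd measurable_const)
  set H : ℝ × ℝ → ℂ := S.indicator (fun p => h p.1 p.2) with hH
  have hSsub : S ⊆ Icc (0, 0) (u, u) := by
    rintro ⟨t, v⟩ ⟨h1, h2, h3⟩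
    exact ⟨⟨le_of_lt h1, by dsimp at *; linarith⟩, ⟨by dsimp at *; linarith, h3⟩⟩
  have hHint : Integrable H := by
    rw [hH, integrable_indicator_iff hSm]
    exact (hc.continuousOn.integrableOn_compact isCompact_Icc).mono_set hSsub
  have lhs_eq : ∫ t in Ioc (0:ℝ) u, ∫ v in Ioc t u, h t v = ∫ t : ℝ, ∫ v : ℝ, H (t, v) := by
    have h1 : ∀ t ∈ Ioc (0:ℝ) u, (∫ v in Ioc t u, h t v) = ∫ v : ℝ, H (t, v) := by
      intro t ht
      rw [← integral_indicator measurableSet_Ioc]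
      congr 1
      ext v
      rw [hH]
      by_cases hv : v ∈ Ioc t u
      · rw [indicator_of_mem hv, indicator_of_mem (show (t, v) ∈ S from ⟨ht.1, hv.1, hv.2⟩) _]
      · rw [indicator_of_notMem hv, indicator_of_notMem (fun hm => hv ⟨hm.2.1, hm.2.2⟩)]
    rw [setIntegral_congr_fun measurableSet_Ioc h1]
    apply setIntegral_eq_integral_of_forall_compl_eq_zero
    intro t ht
    have : ∀ v : ℝ, H (t, v) = 0 := by
      intro v
      apply indicator_of_notMem
      rintro ⟨h1, h2, h3⟩
      simp only [mem_Ioc, not_and_or, not_lt, not_le] at ht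
      rcases ht with ht | ht
      · exact absurd h1 (not_lt.2 ht)
      · dsimp at *; linarith
    simp [this]
  have rhs_eq : ∫ v in Ioc (0:ℝ) u, ∫ t in Ioc (0:ℝ) v, h t v = ∫ v : ℝ, ∫ t : ℝ, H (t, v) := by
    have h1 : ∀ v ∈ Ioc (0:ℝ) u, (∫ t in Ioc (0:ℝ) v, h t v) = ∫ t : ℝ, H (t, v) := by
      intro v hv
      rw [integral_Ioc_eq_integral_Ioo, ← integral_indicator measurableSet_Ioo]
      congr 1
      ext t
      rw [hH]
      by_cases ht : t ∈ Ioo (0:ℝ) v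
      · rw [indicator_of_mem ht, indicator_of_mem (show (t, v) ∈ S from ⟨ht.1, ht.2, hv.2⟩) _]
      · rw [indicator_of_notMem ht, indicator_of_notMem (fun hm => ht ⟨hm.1, hm.2.1⟩)]
    rw [setIntegral_congr_fun measurableSet_Ioc h1]
    apply setIntegral_eq_integral_of_forall_compl_eq_zero
    intro v hv
    have : ∀ t : ℝ, H (t, v) = 0 := by
      intro t
      apply indicator_of_notMem
      rintro ⟨h1, h2, h3⟩
      simp only [mem_Ioc, not_and_or, not_lt, not_le] at hv
      rcases hv with hv | hv
      · dsimp at *; linarith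
      · exact absurd h3 (not_le.2 hv)
    simp [this]
  rw [lhs_eq, rhs_eq]
  rw [Measure.volume_eq_prod] at hHint
  rw [← integral_prod _ hHint, ← integral_prod_symm _ hHint]

lemma tri {G g : ℝ → ℂ} (hd : ∀ x : ℝ, HasDerivAt G (g x) x) (hg : Continuous g)
    (a b C u : ℝ) (hab : a ≠ b) :
    (↑(a - b) : ℂ) * ∫ t in Ioc (0:ℝ) u, ∫ v in Ioc (0:ℝ) (u - t), g (C + v * a + t * b)
      = (∫ v in Ioc (0:ℝ) u, G (C + v * a)) - ∫ v in Ioc (0:ℝ) u, G (C + v * b) := by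
  have hGc : Continuous G := by
    rw [continuous_iff_continuousAt]; exact fun x => (hd x).continuousAt
  have hba : ((b : ℂ) - a) ≠ 0 := by
    intro h
    apply hab
    have := sub_eq_zero.1 h
    exact_mod_cast this.symm
  -- step 1 : translation of inner integral
  have step1 : ∫ t in Ioc (0:ℝ) u, ∫ v in Ioc (0:ℝ) (u - t), g (C + v * a + t * b)
      = ∫ t in Ioc (0:ℝ) u, ∫ v in Ioc t u, g (C + (v - t) * a + t * b) := by
    apply setIntegral_congr_fun measurableSet_Ioc
    intro t ht
    dsimp only
    have h1 : (0:ℝ) ≤ u - t := by simp only [mem_Ioc] at ht; linarith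
    have h2 : t ≤ u := (mem_Ioc.1 ht).2
    rw [← intervalIntegral.integral_of_le h1, ← intervalIntegral.integral_of_le h2]
    have := intervalIntegral.integral_comp_sub_right
      (fun v => g (C + v * a + t * b)) t (a := t) (b := u)
    simp only [sub_self] at this
    rw [← this]
  rw [step1, swap_tri (fun t v => g (C + (v - t) * a + t * b)) (by fun_prop) u]
  -- inner FTC
  have step2 : ∀ v ∈ Ioc (0:ℝ) u,
      (∫ t in Ioc (0:ℝ) v, g (C + (v - t) * a + t * b))
        = (G (C + v * b) - G (C + v * a)) / ((b:ℂ) - a) := by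
    intro v hv
    have hv0 : (0:ℝ) ≤ v := le_of_lt (mem_Ioc.1 hv).1
    have hcong : ∀ t ∈ Ioc (0:ℝ) v, g (C + (v - t) * a + t * b)
        = g (C + v * a + t * (b - a)) := by
      intro t _; congr 1; ring
    rw [setIntegral_congr_fun measurableSet_Ioc hcong, ← intervalIntegral.integral_of_le hv0]
    have hder : ∀ t ∈ uIcc (0:ℝ) v,
        HasDerivAt (fun t => G (C + v * a + t * (b - a)) / ((b:ℂ) - a))
          (g (C + v * a + t * (b - a))) t := by
      intro t _
      have haff : HasDerivAt (fun t : ℝ => C + v * a + t * (b - a)) (b - a) t := by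
        simpa using ((hasDerivAt_id t).mul_const (b - a)).const_add (C + v * a)
      have h1 := ((hd (C + v * a + t * (b - a))).scomp t haff).div_const ((b:ℂ) - a)
      refine h1.congr_deriv ?_
      rw [Complex.real_smul, Complex.ofReal_sub]
      field_simp
    rw [intervalIntegral.integral_eq_sub_of_hasDerivAt hder
      ((hg.comp (by fun_prop)).intervalIntegrable _ _)]
    have : C + v * a + v * (b - a) = C + v * b := by ring
    rw [this]
    simp only [zero_mul, add_zero]
    rw [div_sub_div_same]
  rw [setIntegral_congr_fun measurableSet_Ioc step2]
  have hint : ∀ c : ℝ, IntegrableOn (fun v => G (C + v * c)) (Ioc (0:ℝ) u) := by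
    intro c
    apply Continuous.integrableOn_Ioc
    fun_prop
  rw [integral_div, integral_sub ((hint b).congr_fun (fun v _ => rfl) measurableSet_Ioc)
    ((hint a).congr_fun (fun v _ => rfl) measurableSet_Ioc)]
  field_simp
  push_cast
  ring

lemma continuous_ES (n : ℕ) (l : Fin (n + 1) → ℝ) : Continuous (ES n l) := by
  have : ES n l = fun s => (∑ j : Fin n, s j * l j.castSucc) + (1 - ∑ j, s j) * l (Fin.last n) :=
    funext (ES_apply n l)
  rw [this]
  fun_prop

lemma cons_succ_fun {n : ℕ} (x : ℝ) (m : Fin (n + 1) → ℝ) :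
    (fun j : Fin (n + 1) => (Fin.cons x m : Fin (n + 2) → ℝ) j.succ) = m := by
  funext j; simp

lemma last_cons {n : ℕ} (x : ℝ) (m : Fin (n + 1) → ℝ) :
    (Fin.cons x m : Fin (n + 2) → ℝ) (Fin.last (n + 1)) = m (Fin.last n) := by
  rw [← Fin.succ_last, Fin.cons_succ]

lemma Rset_zero : Rset 0 = univ := by
  ext s; simp [Rset]

lemma volume_Rset_zero : (volume : Measure (Fin 0 → ℝ)) univ = 1 := by
  rw [show (volume : Measure (Fin 0 → ℝ)) = Measure.pi (fun _ => volume) from rfl, Measure.pi_univ]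
  simp

lemma integral_Rset_zero (c : ℂ) : ∫ _ in Rset 0, c = c := by
  rw [Rset_zero, setIntegral_univ, integral_const, Measure.real, volume_Rset_zero]
  simp

lemma keyA (n : ℕ) {G g : ℝ → ℂ} (hd : ∀ x : ℝ, HasDerivAt G (g x) x) (hg : Continuous g)
    (x y : ℝ) (r : Fin n → ℝ) :
    ((x : ℂ) - y) * Psi (n + 1) g (Fin.cons x (Fin.cons y r))
      = Psi n G (Fin.cons x r) - Psi n G (Fin.cons y r) := by
  rcases eq_or_ne x y with rfl | hxy
  · simp
  have hGc : Continuous G := by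
    rw [continuous_iff_continuousAt]; exact fun z => (hd z).continuousAt
  induction n with
  | zero =>
    -- one-dimensional case
    have hpeel := peel 0 (fun s => g (ES 1 (Fin.cons x (Fin.cons y r)) s))
      (hg.comp (continuous_ES _ _))
    rw [Psi, hpeel]
    have hinner : ∀ s : Fin 0 → ℝ, (∫ t in Ioc (0:ℝ) (1 - ∑ j, s j),
        g (ES 1 (Fin.cons x (Fin.cons y r)) (Fin.cons t s))) = ∫ t in Ioc (0:ℝ) 1, g (y + t * (x - y)) := by
      intro s
      have h0 : (1 : ℝ) - ∑ j : Fin 0, s j = 1 := by simp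
      rw [h0]
      congr 1
      funext t
      rw [ES_cons, ES_apply]
      simp only [Finset.univ_eq_empty, Finset.sum_empty, zero_add, sub_zero, one_mul,
        Fin.cons_zero, last_cons]
      have h1 : (Fin.cons y r : Fin 1 → ℝ) (Fin.last 0) = y := rfl
      have h2 : (Fin.cons x (Fin.cons y r) : Fin 2 → ℝ) (Fin.last 0).succ = y := rfl
      rw [h1, h2]
    simp_rw [hinner]
    rw [integral_Rset_zero]
    -- FTC
    have key : (∫ t in Ioc (0:ℝ) 1, g (y + t * (x - y))) = (G x - G y) / ((x:ℂ) - y) := by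
      rw [← intervalIntegral.integral_of_le zero_le_one]
      have hder : ∀ t ∈ uIcc (0:ℝ) 1, HasDerivAt (fun t => G (y + t * (x - y)) / ((x:ℂ) - y))
          (g (y + t * (x - y))) t := by
        intro t _
        have haff : HasDerivAt (fun t : ℝ => y + t * (x - y)) (x - y) t := by
          simpa using ((hasDerivAt_id t).mul_const (x - y)).const_add y
        have h1 := ((hd (y + t * (x - y))).scomp t haff).div_const ((x:ℂ) - y)
        refine h1.congr_deriv ?_
        rw [Complex.real_smul, Complex.ofReal_sub]
        have hxy' : ((x:ℂ) - y) ≠ 0 := by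
          intro h; exact hxy (by exact_mod_cast sub_eq_zero.1 h)
        field_simp
      rw [intervalIntegral.integral_eq_sub_of_hasDerivAt hder
        ((hg.comp (by fun_prop)).intervalIntegrable _ _)]
      simp only [one_mul, zero_mul, add_zero]
      rw [div_sub_div_same]
      have : y + (x - y) = x := by ring
      rw [this]
    rw [key]
    have hxy' : ((x:ℂ) - y) ≠ 0 := by
      intro h; exact hxy (by exact_mod_cast sub_eq_zero.1 h)
    rw [mul_div_cancel₀ _ hxy']
    have h1 : Psi 0 G (Fin.cons x r) = G x := by
      rw [Psi]
      have : ∀ s : Fin 0 → ℝ, G (ES 0 (Fin.cons x r) s) = G x := by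
        intro s
        congr 1
        rw [ES_apply]
        simp [Fin.last]
      simp_rw [this]
      exact integral_Rset_zero _
    have h2 : Psi 0 G (Fin.cons y r) = G y := by
      rw [Psi]
      have : ∀ s : Fin 0 → ℝ, G (ES 0 (Fin.cons y r) s) = G y := by
        intro s
        congr 1
        rw [ES_apply]
        simp [Fin.last]
      simp_rw [this]
      exact integral_Rset_zero _
    rw [h1, h2]
  | succ k _ =>
    set c : ℝ := r (Fin.last k) with hc
    have hxyC : ((x:ℂ) - y) ≠ 0 := by
      intro h; exact hxy (by exact_mod_cast sub_eq_zero.1 h)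
    -- inner integral after first peel, in interval form
    set J : (Fin (k + 1) → ℝ) → ℂ :=
      fun s => ∫ t in (0:ℝ)..(1 - ∑ j, s j), g (ES (k + 1) (Fin.cons y r) s + t * (x - c))
      with hJ
    have hJcont : Continuous J := by
      apply intervalIntegral.continuous_parametric_intervalIntegral_of_continuous
      · have : Continuous fun p : (Fin (k + 1) → ℝ) × ℝ =>
            g (ES (k + 1) (Fin.cons y r) p.1 + p.2 * (x - c)) :=
          hg.comp (((continuous_ES _ _).comp continuous_fst).add
            (continuous_snd.mul continuous_const))
        exact this
      · fun_prop
    have hlast : (Fin.cons x (Fin.cons y r) : Fin (k + 3) → ℝ) (Fin.last (k + 2)) = c := by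
      rw [last_cons, last_cons]
    have hlast2 : (Fin.cons y r : Fin (k + 2) → ℝ) (Fin.last (k + 1)) = c := by
      rw [last_cons]
    have step1 : Psi (k + 2) g (Fin.cons x (Fin.cons y r)) = ∫ s in Rset (k + 1), J s := by
      rw [Psi, peel (k + 1) (fun s => g (ES (k + 2) (Fin.cons x (Fin.cons y r)) s))
        (by exact hg.comp (continuous_ES _ _))]
      apply setIntegral_congr_fun (measurableSet_Rset _)
      intro s hs
      dsimp only
      rw [hJ]
      dsimp only
      rw [← intervalIntegral.integral_of_le (by linarith [hs.2] : (0:ℝ) ≤ 1 - ∑ j, s j)]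
      congr 1
      funext t
      rw [ES_cons, cons_succ_fun, Fin.cons_zero, hlast]
    have step2 : ∫ s in Rset (k + 1), J s
        = ∫ s in Rset k, ∫ t in Ioc (0:ℝ) (1 - ∑ j, s j), J (Fin.cons t s) :=
      peel k J hJcont
    have step3 : ∀ s'' ∈ Rset k, ((x:ℂ) - y) * ∫ t in Ioc (0:ℝ) (1 - ∑ j, s'' j), J (Fin.cons t s'')
        = (∫ v in (0:ℝ)..(1 - ∑ j, s'' j), G (ES k r s'' + v * (x - c)))
          - ∫ v in (0:ℝ)..(1 - ∑ j, s'' j), G (ES k r s'' + v * (y - c)) := by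
      intro s'' hs
      have hu0 : (0:ℝ) ≤ 1 - ∑ j, s'' j := by linarith [hs.2]
      have hJc : ∀ t ∈ Ioc (0:ℝ) (1 - ∑ j, s'' j), J (Fin.cons t s'')
          = ∫ v in Ioc (0:ℝ) ((1 - ∑ j, s'' j) - t),
              g (ES k r s'' + v * (x - c) + t * (y - c)) := by
        intro t ht
        rw [hJ]
        dsimp only
        have hsum : ∑ j, (Fin.cons t s'' : Fin (k + 1) → ℝ) j = t + ∑ j, s'' j := by
          rw [Fin.sum_univ_succ]
          simp
        have hES : ES (k + 1) (Fin.cons y r) (Fin.cons t s'')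
            = ES k r s'' + t * (y - c) := by
          rw [ES_cons, cons_succ_fun, Fin.cons_zero, hlast2]
        rw [hsum, hES]
        have heq : (1:ℝ) - (t + ∑ j, s'' j) = (1 - ∑ j, s'' j) - t := by ring
        rw [heq, intervalIntegral.integral_of_le (by linarith [ht.2])]
        apply setIntegral_congr_fun measurableSet_Ioc
        intro v _
        congr 1
        ring
      rw [setIntegral_congr_fun measurableSet_Ioc hJc]
      have hab : (x - c) ≠ (y - c) := fun h => hxy (by linarith)
      have := tri hd hg (x - c) (y - c) (ES k r s'') (1 - ∑ j, s'' j) hab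
      have hsc : ((x:ℂ) - y) = ↑((x - c) - (y - c)) := by push_cast; ring
      rw [hsc, this]
      rw [intervalIntegral.integral_of_le hu0, intervalIntegral.integral_of_le hu0]
    have hPint : ∀ z : ℝ, IntegrableOn
        (fun s'' => ∫ v in (0:ℝ)..(1 - ∑ j, s'' j), G (ES k r s'' + v * (z - c)))
        (Rset k) := by
      intro z
      have hcontP : Continuous
          (fun s'' : Fin k → ℝ => ∫ v in (0:ℝ)..(1 - ∑ j, s'' j), G (ES k r s'' + v * (z - c))) := by
        apply intervalIntegral.continuous_parametric_intervalIntegral_of_continuous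
        · have : Continuous fun p : (Fin k → ℝ) × ℝ =>
              G (ES k r p.1 + p.2 * (z - c)) :=
            hGc.comp (((continuous_ES _ _).comp continuous_fst).add
              (continuous_snd.mul continuous_const))
          exact this
        · fun_prop
      exact hcontP.continuousOn.integrableOn_compact (isCompact_Rset k)
    have unpeel : ∀ z : ℝ,
        (∫ s'' in Rset k, ∫ v in (0:ℝ)..(1 - ∑ j, s'' j), G (ES k r s'' + v * (z - c)))
          = Psi (k + 1) G (Fin.cons z r) := by
      intro z
      rw [Psi, peel k (fun s => G (ES (k + 1) (Fin.cons z r) s))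
        (by exact hGc.comp (continuous_ES _ _))]
      apply setIntegral_congr_fun (measurableSet_Rset _)
      intro s hs
      dsimp only
      rw [intervalIntegral.integral_of_le (by linarith [hs.2] : (0:ℝ) ≤ 1 - ∑ j, s j)]
      apply setIntegral_congr_fun measurableSet_Ioc
      intro v _
      dsimp only
      rw [ES_cons, cons_succ_fun, Fin.cons_zero, last_cons]
    rw [step1, step2, ← integral_const_mul]
    rw [setIntegral_congr_fun (measurableSet_Rset k) step3]
    rw [integral_sub (hPint x) (hPint y), unpeel x, unpeel y]

lemma ES_cons_param (n : ℕ) (x : ℝ) (m : Fin (n + 1) → ℝ) (s : Fin (n + 1) → ℝ) :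
    ES (n + 1) (Fin.cons x m) s
      = s 0 * x + ((∑ i : Fin n, s i.succ * m i.castSucc) + (1 - ∑ j, s j) * m (Fin.last n)) := by
  rw [ES_apply, Fin.sum_univ_succ, Fin.castSucc_zero, Fin.cons_zero, last_cons]
  rw [add_assoc]
  congr 2

lemma keyB (n : ℕ) {g : ℝ → ℂ} (hg : Continuous g) (m : Fin (n + 1) → ℝ) :
    Continuous fun x => Psi (n + 1) g (Fin.cons x m) := by
  have hu : Continuous (Function.uncurry fun (x : ℝ) (s : Fin (n + 1) → ℝ) =>
      g (ES (n + 1) (Fin.cons x m) s)) := by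
    have heq : (Function.uncurry fun (x : ℝ) (s : Fin (n + 1) → ℝ) =>
        g (ES (n + 1) (Fin.cons x m) s))
        = fun p : ℝ × (Fin (n + 1) → ℝ) =>
            g (p.2 0 * p.1 + ((∑ i : Fin n, p.2 i.succ * m i.castSucc)
              + (1 - ∑ j, p.2 j) * m (Fin.last n))) := by
      funext p
      simp only [Function.uncurry]
      rw [ES_cons_param]
    rw [heq]
    apply hg.comp
    fun_prop
  have := continuous_parametric_integral_of_continuous (μ := volume) hu (isCompact_Rset (n + 1))
  simpa only [Psi] using this

theorem stmt4 (n : ℕ) (f : ℝ → ℂ) (hf : ContDiff ℝ n f) (l : Fin (n + 1) → ℝ) :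
    dd f n l =
      ∫ s in Rset n, iteratedDeriv n f (∑ j : Fin (n + 1), simplexExt n s j * l j) := by
  rw [show (∫ s in Rset n, iteratedDeriv n f (∑ j : Fin (n + 1), simplexExt n s j * l j))
      = Psi n (iteratedDeriv n f) l from rfl]
  induction n with
  | zero =>
    have h1 : dd f 0 l = f (l 0) := rfl
    rw [h1, Psi]
    have h2 : ∀ s : Fin 0 → ℝ, iteratedDeriv 0 f (ES 0 l s) = f (l 0) := by
      intro s
      rw [iteratedDeriv_zero]
      congr 1
      rw [ES_apply]
      simp [Fin.last]
    simp_rw [h2]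
    exact (integral_Rset_zero _).symm
  | succ n ih =>
    have hg : Continuous (iteratedDeriv (n + 1) f) := by
      apply hf.continuous_iteratedDeriv
      exact_mod_cast le_rfl
    have hdiff : Differentiable ℝ (iteratedDeriv n f) := by
      apply hf.differentiable_iteratedDeriv
      exact_mod_cast n.lt_succ_self
    have hd : ∀ x : ℝ, HasDerivAt (iteratedDeriv n f) (iteratedDeriv (n + 1) f x) x := by
      intro x
      rw [iteratedDeriv_succ]
      exact (hdiff x).hasDerivAt
    have hIH : ∀ l' : Fin (n + 1) → ℝ, dd f n l' = Psi n (iteratedDeriv n f) l' := by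
      intro l'
      apply ih
      exact hf.of_le (by exact_mod_cast n.le_succ)
    set r : Fin n → ℝ := fun j => l j.succ.succ with hr
    have hm : ∀ x : ℝ, (fun i : Fin (n + 1) => if i = 0 then x else l i.succ) = Fin.cons x r := by
      intro x
      funext i
      cases i using Fin.cases with
      | zero => simp
      | succ j => simp [Fin.succ_ne_zero, hr]
    have hl : l = Fin.cons (l 0) (Fin.cons (l 1) r) := by
      funext i
      cases i using Fin.cases with
      | zero => simp
      | succ j =>
        cases j using Fin.cases with
        | zero => simp
        | succ k => simp [hr]
    have hdd : dd f (n + 1) l =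
        if l 0 = l 1 then
          deriv (fun x => dd f n (fun i => if i = 0 then x else l i.succ)) (l 1)
        else
          (dd f n (fun i => if i = 0 then l 0 else l i.succ) -
            dd f n (fun i => if i = 0 then l 1 else l i.succ)) / (((l 0 : ℂ)) - ((l 1 : ℂ))) := rfl
    rw [hdd]
    by_cases h : l 0 = l 1
    · rw [if_pos h]
      have hfun : (fun x => dd f n (fun i : Fin (n + 1) => if i = 0 then x else l i.succ))
          = fun x => Psi n (iteratedDeriv n f) (Fin.cons x r) := by
        funext x
        rw [hIH, hm x]
      rw [hfun]
      set Q : ℝ → ℂ := fun x =>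
        Psi (n + 1) (iteratedDeriv (n + 1) f) (Fin.cons x (Fin.cons (l 1) r)) with hQ
      have hQc : Continuous Q := keyB n hg (Fin.cons (l 1) r)
      have hslope : ∀ x : ℝ, Psi n (iteratedDeriv n f) (Fin.cons x r)
          - Psi n (iteratedDeriv n f) (Fin.cons (l 1) r) = ((x : ℂ) - (l 1 : ℝ)) * Q x := by
        intro x
        rw [hQ, ← keyA n hd hg x (l 1) r]
      have hder : HasDerivAt (fun x => Psi n (iteratedDeriv n f) (Fin.cons x r))
          (Q (l 1)) (l 1) := by
        rw [hasDerivAt_iff_tendsto_slope]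
        have hev : slope (fun x => Psi n (iteratedDeriv n f) (Fin.cons x r)) (l 1)
            =ᶠ[nhdsWithin (l 1) {(l 1)}ᶜ] Q := by
          filter_upwards [self_mem_nhdsWithin] with x hx
          have hx' : x ≠ l 1 := hx
          have hne : ((x : ℂ)) - ((l 1 : ℂ)) ≠ 0 := by
            intro hzero
            exact hx' (by exact_mod_cast sub_eq_zero.1 hzero)
          rw [slope]
          simp only [vsub_eq_sub]
          rw [hslope x, Complex.real_smul]
          push_cast
          rw [inv_mul_cancel_left₀ hne]
        exact Filter.Tendsto.congr' hev.symm
          ((hQc.tendsto (l 1)).mono_left nhdsWithin_le_nhds)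
      rw [hder.deriv]
      rw [h] at hl
      simp only [hQ]
      rw [← hl]
    · rw [if_neg h]
      rw [hIH, hIH, hm (l 0), hm (l 1)]
      have hkey := keyA n hd hg (l 0) (l 1) r
      rw [← hl] at hkey
      rw [← hkey]
      have hne : ((l 0 : ℂ)) - ((l 1 : ℂ)) ≠ 0 := by
        intro hzero
        exact h (by exact_mod_cast sub_eq_zero.1 hzero)
      exact mul_div_cancel_left₀ _ hne
end

section
/- There exists a measurable function g : ℝ → ℂ such that ∫_ℝ |s|ⁿ |g(s)| ds < ∞ for every n ≥ 0, and for all real numbers μ ≥ λ > 0 one has λ/μ = ∫_ℝ g(s) λ^{is} μ^{-is} ds. -/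
open MeasureTheory Complex

noncomputable section

namespace Stmt8Aux

open Real Filter

/-- Smooth cutoff: equals 1 on `(-∞, 0]`, 0 on `[1, ∞)`. -/
def kcut : ℝ → ℝ := fun x => 1 - Real.smoothTransition x

lemma kcut_contDiff : ContDiff ℝ ((⊤ : ℕ∞) : WithTop ℕ∞) kcut :=
  contDiff_const.sub Real.smoothTransition.contDiff

lemma kcut_one {x : ℝ} (hx : x ≤ 0) : kcut x = 1 := by
  simp [kcut, Real.smoothTransition.zero_of_nonpos hx]

lemma kcut_zero {x : ℝ} (hx : 1 ≤ x) : kcut x = 0 := by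
  simp [kcut, Real.smoothTransition.one_of_one_le hx]

lemma iteratedDeriv_const' {F : Type*} [NormedAddCommGroup F] [NormedSpace ℝ F]
    {n : ℕ} (hn : n ≠ 0) (c : F) (x : ℝ) : iteratedDeriv n (fun _ : ℝ => c) x = 0 := by
  rw [iteratedDeriv_eq_iteratedFDeriv, iteratedFDeriv_const_of_ne hn]
  simp

lemma kcut_iteratedDeriv_bound (j : ℕ) :
    ∃ B : ℝ, 0 ≤ B ∧ ∀ x, ‖iteratedDeriv j kcut x‖ ≤ B := by
  rcases Nat.eq_zero_or_pos j with hj | hj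
  · refine ⟨1, zero_le_one, fun x => ?_⟩
    subst hj
    have h1 := Real.smoothTransition.nonneg x
    have h2 := Real.smoothTransition.le_one x
    rw [iteratedDeriv_zero, Real.norm_eq_abs, abs_le]
    constructor <;> simp [kcut] <;> linarith
  · have hc : Continuous (iteratedDeriv j kcut) :=
      kcut_contDiff.continuous_iteratedDeriv j (mod_cast le_top)
    obtain ⟨B, hB⟩ := (isCompact_Icc (a := (0:ℝ)) (b := 1)).exists_bound_of_continuousOn
      hc.continuousOn
    refine ⟨max B 0, le_max_right _ _, fun x => ?_⟩
    by_cases hx : x ∈ Set.Icc (0:ℝ) 1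
    · exact (hB x hx).trans (le_max_left _ _)
    · have hzero : iteratedDeriv j kcut x = 0 := by
        rcases not_and_or.1 hx with h | h
        · push_neg at h
          have hev : kcut =ᶠ[nhds x] fun _ => (1 : ℝ) :=
            Filter.eventually_of_mem (Iio_mem_nhds h) fun z hz => kcut_one (le_of_lt hz)
          rw [hev.iteratedDeriv_eq j]
          exact iteratedDeriv_const' hj.ne' (1 : ℝ) x
        · push_neg at h
          have hev : kcut =ᶠ[nhds x] fun _ => (0 : ℝ) :=
            Filter.eventually_of_mem (Ioi_mem_nhds h) fun z hz => kcut_zero (le_of_lt hz)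
          rw [hev.iteratedDeriv_eq j]
          exact iteratedDeriv_const' hj.ne' (0 : ℝ) x
      rw [hzero]
      simp [le_max_right B 0]

/-- choice of bound -/
def Bk (j : ℕ) : ℝ := (kcut_iteratedDeriv_bound j).choose

lemma Bk_nonneg (j : ℕ) : 0 ≤ Bk j := (kcut_iteratedDeriv_bound j).choose_spec.1

lemma Bk_bound (j : ℕ) (x : ℝ) : ‖iteratedDeriv j kcut x‖ ≤ Bk j :=
  (kcut_iteratedDeriv_bound j).choose_spec.2 x

/-- complex exponential part -/
def Efn : ℝ → ℂ := fun y => Complex.exp (((2 * Real.pi : ℝ) : ℂ) * y)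

lemma Efn_eq (y : ℝ) : Efn y = Complex.exp (((2 * Real.pi * y : ℝ)) : ℂ) := by
  rw [Efn]; push_cast; ring_nf

lemma Efn_hasDerivAt (y : ℝ) :
    HasDerivAt Efn (((2 * Real.pi : ℝ) : ℂ) * Efn y) y := by
  set c : ℂ := ((2 * Real.pi : ℝ) : ℂ)
  have h0 : HasDerivAt (fun z : ℂ => c * z) c (y : ℂ) := by
    simpa using (hasDerivAt_id (y : ℂ)).const_mul c
  have h1 : HasDerivAt (fun z : ℂ => Complex.exp (c * z))
      (Complex.exp (c * (y : ℂ)) * c) (y : ℂ) :=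
    (Complex.hasDerivAt_exp (c * (y : ℂ))).comp (y : ℂ) h0
  have h2 := h1.comp_ofReal
  have h3 : Efn = fun t : ℝ => Complex.exp (c * (t : ℂ)) := rfl
  rw [h3]
  convert h2 using 1
  simp only [Efn]
  ring

lemma Efn_contDiff : ContDiff ℝ ((⊤ : ℕ∞) : WithTop ℕ∞) Efn := by
  have : Efn = Complex.exp ∘ (fun y : ℝ => (((2 * Real.pi : ℝ) : ℂ) * (y : ℂ))) := rfl
  rw [this]
  exact (Complex.contDiff_exp (𝕜 := ℂ)).restrict_scalars ℝ |>.comp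
    ((contDiff_const.mul (Complex.ofRealCLM.contDiff)))

lemma Efn_iteratedDeriv (n : ℕ) :
    iteratedDeriv n Efn = fun y => ((2 * Real.pi : ℝ) : ℂ) ^ n * Efn y := by
  induction n with
  | zero => simp
  | succ n ih =>
    rw [iteratedDeriv_succ, ih]
    funext y
    rw [((Efn_hasDerivAt y).const_mul (((2 * Real.pi : ℝ) : ℂ) ^ n)).deriv]
    ring

lemma Efn_norm_iteratedFDeriv (n : ℕ) (y : ℝ) :
    ‖iteratedFDeriv ℝ n Efn y‖ = (2 * Real.pi) ^ n * Real.exp (2 * Real.pi * y) := by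
  rw [norm_iteratedFDeriv_eq_norm_iteratedDeriv, Efn_iteratedDeriv]
  have hpi : (0:ℝ) ≤ 2 * Real.pi := by positivity
  simp only [Efn_eq, norm_mul, norm_pow, Complex.norm_real, Real.norm_eq_abs,
    _root_.abs_of_nonneg hpi, abs_two, Complex.norm_exp, Complex.ofReal_re,
    abs_of_pos Real.pi_pos]

/-- The function: `e^{2π y}` cut off to vanish for `y ≥ 1`; equals `e^{2π y}` for `y ≤ 0`. -/
def fS : ℝ → ℂ := fun y => Efn y * ((kcut y : ℝ) : ℂ)

lemma kC_contDiff : ContDiff ℝ ((⊤ : ℕ∞) : WithTop ℕ∞) (fun y => ((kcut y : ℝ) : ℂ)) :=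
  Complex.ofRealCLM.contDiff.comp kcut_contDiff

lemma fS_contDiff : ContDiff ℝ ((⊤ : ℕ∞) : WithTop ℕ∞) fS := Efn_contDiff.mul kC_contDiff

lemma kC_norm_iteratedFDeriv (j : ℕ) (y : ℝ) :
    ‖iteratedFDeriv ℝ j (fun y => ((kcut y : ℝ) : ℂ)) y‖ ≤ Bk j := by
  have heq : (fun y => ((kcut y : ℝ) : ℂ)) = (Complex.ofRealLI : ℝ →ₗᵢ[ℝ] ℂ) ∘ kcut := rfl
  rw [heq, Complex.ofRealLI.norm_iteratedFDeriv_comp_left kcut_contDiff.contDiffAt (mod_cast le_top),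
    norm_iteratedFDeriv_eq_norm_iteratedDeriv]
  exact Bk_bound j y

/-- coefficient -/
def Cn (n : ℕ) : ℝ :=
  ∑ i ∈ Finset.range (n + 1), (n.choose i : ℝ) * (2 * Real.pi) ^ i * Bk (n - i)

lemma Cn_nonneg (n : ℕ) : 0 ≤ Cn n := by
  apply Finset.sum_nonneg
  intro i _
  have := Bk_nonneg (n - i)
  positivity

lemma fS_iteratedFDeriv_bound (n : ℕ) (y : ℝ) :
    ‖iteratedFDeriv ℝ n fS y‖ ≤ Cn n * Real.exp (2 * Real.pi * y) := by
  refine (norm_iteratedFDeriv_mul_le Efn_contDiff kC_contDiff y (mod_cast le_top)).trans ?_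
  rw [Cn, Finset.sum_mul]
  apply Finset.sum_le_sum
  intro i _
  rw [Efn_norm_iteratedFDeriv]
  have h2 := kC_norm_iteratedFDeriv (n - i) y
  have hc : (0:ℝ) ≤ (n.choose i : ℝ) * ((2 * Real.pi) ^ i * Real.exp (2 * Real.pi * y)) := by
    positivity
  calc (n.choose i : ℝ) * ((2 * Real.pi) ^ i * Real.exp (2 * Real.pi * y)) *
        ‖iteratedFDeriv ℝ (n - i) (fun y => ((kcut y : ℝ) : ℂ)) y‖
      ≤ (n.choose i : ℝ) * ((2 * Real.pi) ^ i * Real.exp (2 * Real.pi * y)) * Bk (n - i) :=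
        mul_le_mul_of_nonneg_left h2 hc
    _ = (n.choose i : ℝ) * (2 * Real.pi) ^ i * Bk (n - i) * Real.exp (2 * Real.pi * y) := by ring

lemma fS_eq_zero {y : ℝ} (hy : 1 ≤ y) : fS y = 0 := by
  simp [fS, kcut_zero hy]

lemma fS_iteratedFDeriv_zero (n : ℕ) {y : ℝ} (hy : 2 ≤ y) : ‖iteratedFDeriv ℝ n fS y‖ = 0 := by
  have hev : fS =ᶠ[nhds y] fun _ => (0 : ℂ) :=
    Filter.eventually_of_mem (Ioi_mem_nhds (by linarith : (1:ℝ) < y))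
      fun z hz => fS_eq_zero (le_of_lt hz)
  rw [norm_iteratedFDeriv_eq_norm_iteratedDeriv, hev.iteratedDeriv_eq n]
  rcases Nat.eq_zero_or_pos n with h | h
  · subst h; simp
  · rw [iteratedDeriv_const' h.ne' (0 : ℂ) y, norm_zero]

lemma weight_bound (q : ℕ) {y : ℝ} (hy : y ≤ 2) :
    |y| ^ q * Real.exp (2 * Real.pi * y) ≤
      (q.factorial : ℝ) * Real.exp (4 * Real.pi) * 2 ^ q + (q.factorial : ℝ) := by
  have hfac : (1:ℝ) ≤ (q.factorial : ℝ) := by exact_mod_cast q.factorial_pos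
  have hexp4 : (1:ℝ) ≤ Real.exp (4 * Real.pi) := by
    rw [← Real.exp_zero]; apply Real.exp_le_exp.2; positivity
  have h2q : (1:ℝ) ≤ 2 ^ q := one_le_pow₀ (one_le_two (α := ℝ))
  rcases le_or_gt y 0 with h0 | h0
  · have h1 : |y| ^ q ≤ (q.factorial : ℝ) * Real.exp (-y) := by
      have := Real.pow_div_factorial_le_exp (x := -y) (by linarith) q
      rw [abs_of_nonpos h0]
      rw [div_le_iff₀ (by positivity : (0:ℝ) < (q.factorial : ℝ))] at this
      linarith [this]
    have h2 : Real.exp (2 * Real.pi * y) ≤ Real.exp y := by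
      apply Real.exp_le_exp.2
      nlinarith [Real.pi_gt_three]
    have h3 : |y| ^ q * Real.exp (2 * Real.pi * y) ≤
        ((q.factorial : ℝ) * Real.exp (-y)) * Real.exp y :=
      mul_le_mul h1 h2 (Real.exp_pos _).le (by positivity)
    have h4 : ((q.factorial : ℝ) * Real.exp (-y)) * Real.exp y = (q.factorial : ℝ) := by
      rw [mul_assoc, ← Real.exp_add]
      simp
    rw [h4] at h3
    nlinarith [mul_nonneg (mul_nonneg (by linarith : (0:ℝ) ≤ (q.factorial : ℝ))
      (by linarith : (0:ℝ) ≤ Real.exp (4 * Real.pi))) (by linarith : (0:ℝ) ≤ (2:ℝ) ^ q)]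
  · have h1 : |y| ^ q ≤ 2 ^ q := by
      apply pow_le_pow_left₀ (abs_nonneg y) _ q
      rw [abs_of_pos h0]; exact hy
    have h2 : Real.exp (2 * Real.pi * y) ≤ Real.exp (4 * Real.pi) := by
      apply Real.exp_le_exp.2
      nlinarith [Real.pi_pos]
    have h3 : |y| ^ q * Real.exp (2 * Real.pi * y) ≤ 2 ^ q * Real.exp (4 * Real.pi) :=
      mul_le_mul h1 h2 (Real.exp_pos _).le (by positivity)
    nlinarith [mul_nonneg (mul_nonneg (by linarith : (0:ℝ) ≤ (q.factorial : ℝ) - 1)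
      (by linarith : (0:ℝ) ≤ Real.exp (4 * Real.pi))) (by linarith : (0:ℝ) ≤ (2:ℝ) ^ q)]

/-- The Schwartz function. -/
def fSch : SchwartzMap ℝ ℂ where
  toFun := fS
  smooth' := fS_contDiff
  decay' := by
    intro q n
    refine ⟨Cn n * ((q.factorial : ℝ) * Real.exp (4 * Real.pi) * 2 ^ q + (q.factorial : ℝ)),
      fun y => ?_⟩
    rcases le_or_gt y 2 with hy | hy
    · calc ‖y‖ ^ q * ‖iteratedFDeriv ℝ n fS y‖
          ≤ ‖y‖ ^ q * (Cn n * Real.exp (2 * Real.pi * y)) :=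
            mul_le_mul_of_nonneg_left (fS_iteratedFDeriv_bound n y) (by positivity)
        _ = Cn n * (|y| ^ q * Real.exp (2 * Real.pi * y)) := by
            rw [Real.norm_eq_abs]; ring
        _ ≤ Cn n * ((q.factorial : ℝ) * Real.exp (4 * Real.pi) * 2 ^ q + (q.factorial : ℝ)) :=
            mul_le_mul_of_nonneg_left (weight_bound q hy) (Cn_nonneg n)
    · rw [fS_iteratedFDeriv_zero n hy.le, mul_zero]
      have hfac : (0:ℝ) < (q.factorial : ℝ) := by exact_mod_cast q.factorial_pos
      have hCn := Cn_nonneg n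
      have hexp4 : (0:ℝ) < Real.exp (4 * Real.pi) := Real.exp_pos _
      positivity

end Stmt8Aux

end

open scoped FourierTransform RealInnerProductSpace

theorem stmt8 :
    ∃ g : ℝ → ℂ, Measurable g ∧
      (∀ n : ℕ, Integrable (fun s : ℝ => |s| ^ n * ‖g s‖)) ∧
      ∀ l m : ℝ, 0 < l → l ≤ m →
        ((l / m : ℝ) : ℂ) =
          ∫ s : ℝ, g s * Complex.exp (Complex.I * s * Real.log l) *
            Complex.exp (-(Complex.I * s * Real.log m)) := by
  classical
  set G := SchwartzMap.fourierTransformCLM ℂ Stmt8Aux.fSch with hG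
  refine ⟨⇑G, G.continuous.measurable, ?_, ?_⟩
  · intro n
    simpa [Real.norm_eq_abs] using G.integrable_pow_mul (volume) n
  · intro l m hl hlm
    have hm : 0 < m := hl.trans_le hlm
    set x := Real.log l - Real.log m with hxdef
    have hx0 : x ≤ 0 := sub_nonpos.2 (Real.log_le_log hl hlm)
    have hpi : (0:ℝ) < 2 * Real.pi := by positivity
    set y := x / (2 * Real.pi) with hydef
    have hxy : 2 * Real.pi * y = x := by
      rw [hydef]; field_simp
    have hy0 : y ≤ 0 := div_nonpos_iff.mpr (Or.inr ⟨hx0, hpi.le⟩)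
    have hGco : ⇑G = 𝓕 (Stmt8Aux.fS) := by
      rw [hG]
      exact SchwartzMap.fourier_coe Stmt8Aux.fSch
    have key : (∫ s : ℝ, G s * Complex.exp (Complex.I * s * Real.log l) *
        Complex.exp (-(Complex.I * s * Real.log m))) = 𝓕⁻ (𝓕 Stmt8Aux.fS) y := by
      rw [Real.fourierInv_eq']
      congr 1
      funext s
      rw [hGco, smul_eq_mul, mul_comm (Complex.exp _) (𝓕 Stmt8Aux.fS s),
        mul_assoc, ← Complex.exp_add]
      congr 1
      have hinner : ⟪s, y⟫ = s * y := RCLike.inner_apply' s y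
      rw [hinner]
      have hsx : 2 * Real.pi * (s * y) = s * x := by
        rw [← hxy]; ring
      rw [hsx, hxdef]
      push_cast
      ring
    have hinv : 𝓕⁻ (𝓕 Stmt8Aux.fS) y = Stmt8Aux.fS y := by
      have h1 : Continuous Stmt8Aux.fS := Stmt8Aux.fSch.continuous
      have h2 : Integrable Stmt8Aux.fS := Stmt8Aux.fSch.integrable
      have h3 : Integrable (𝓕 Stmt8Aux.fS) := by
        rw [← hGco]; exact G.integrable
      rw [h1.fourierInv_fourier_eq h2 h3]
    rw [key, hinv]
    rw [Stmt8Aux.fS]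
    simp only [Stmt8Aux.kcut_one hy0, Complex.ofReal_one, mul_one]
    rw [Stmt8Aux.Efn_eq, hxy, hxdef]
    rw [← Complex.ofReal_exp, Real.exp_sub, Real.exp_log hl, Real.exp_log hm]
end

section
/- Let H, V be self-adjoint operators on a finite-dimensional complex inner product space, and f : ℝ → ℂ a polynomial of degree at most n. Then the Taylor remainder Δ_{n,f}(H,V) = f(H+V) - ∑_{k=0}^{n-1} (1/k!) (d^k/dt^k)[f(H+tV)]|_{t=0} satisfies Tr(Δ_{n,f}(H,V)) = (aₙ/n!) Tr(Vⁿ) · n!, i.e., for f(t) = tⁿ, Tr(Δ_{n,f}(H,V)) = Tr(Vⁿ). -/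
set_option synthInstance.maxHeartbeats 1000000
set_option maxHeartbeats 1000000


open MeasureTheory

section aux

variable {𝓗 : Type*} [NormedAddCommGroup 𝓗] [InnerProductSpace ℂ 𝓗]

private lemma aux_iter (N : ℕ) (c : ℕ → 𝓗 →L[ℂ] 𝓗) (m : ℕ) :
    iteratedDeriv m (fun t : ℝ => ∑ k ∈ Finset.range N, t ^ k • c k) =
      fun t : ℝ => ∑ k ∈ Finset.range N,
        ((k.descFactorial m : ℝ) * t ^ (k - m)) • c k := by
  induction m with
  | zero => simp
  | succ m ih =>
    rw [iteratedDeriv_succ, ih]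
    funext t
    have h : HasDerivAt
        (fun t : ℝ => ∑ k ∈ Finset.range N, ((k.descFactorial m : ℝ) * t ^ (k - m)) • c k)
        (∑ k ∈ Finset.range N, ((k.descFactorial (m + 1) : ℝ) * t ^ (k - (m + 1))) • c k) t := by
      refine HasDerivAt.fun_sum fun k _ => ?_
      have h1 : HasDerivAt (fun t : ℝ => (k.descFactorial m : ℝ) * t ^ (k - m))
          ((k.descFactorial m : ℝ) * (((k - m : ℕ) : ℝ) * t ^ (k - m - 1))) t :=
        (hasDerivAt_pow (k - m) t).const_mul _
      have := h1.smul_const (c k)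
      convert this using 2
      rw [Nat.descFactorial_succ, Nat.sub_sub]
      push_cast
      ring
    exact h.deriv

private lemma aux_at_zero (N m : ℕ) (hm : m < N) (c : ℕ → 𝓗 →L[ℂ] 𝓗) :
    iteratedDeriv m (fun t : ℝ => ∑ k ∈ Finset.range N, t ^ k • c k) 0 =
      (m.factorial : ℝ) • c m := by
  rw [aux_iter]
  beta_reduce
  rw [Finset.sum_eq_single_of_mem m (Finset.mem_range.2 hm)]
  · simp [Nat.descFactorial_self]
  · intro j _ hj
    rcases lt_or_gt_of_ne hj with h | h
    · simp [Nat.descFactorial_eq_zero_iff_lt.2 h]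
    · rw [zero_pow (Nat.sub_ne_zero_of_lt h)]
      simp

private lemma aux_rep (H V : 𝓗 →L[ℂ] 𝓗) (n : ℕ) :
    ∃ c : ℕ → 𝓗 →L[ℂ] 𝓗, c n = V ^ n ∧
      ∀ t : ℝ, (H + t • V) ^ n = ∑ k ∈ Finset.range (n + 1), t ^ k • c k := by
  induction n with
  | zero => exact ⟨fun _ => 1, by simp, by simp⟩
  | succ n ih =>
    obtain ⟨c, hc, hrep⟩ := ih
    refine ⟨fun k => (if k ≤ n then c k * H else 0) + (if k = 0 then 0 else c (k - 1) * V),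
      by simp [hc, pow_succ], fun t => ?_⟩
    rw [pow_succ, hrep t]
    beta_reduce
    have step1 : (∑ k ∈ Finset.range (n + 1), t ^ k • c k) * (H + t • V)
        = (∑ k ∈ Finset.range (n + 1), t ^ k • (c k * H))
          + ∑ k ∈ Finset.range (n + 1), t ^ (k + 1) • (c k * V) := by
      rw [mul_add, Finset.sum_mul, Finset.sum_mul]
      simp [smul_mul_assoc, mul_smul_comm, smul_smul, pow_succ, mul_comm]
    rw [step1]
    have step2 : ∀ k ∈ Finset.range (n + 1 + 1),
        t ^ k • ((if k ≤ n then c k * H else 0) + (if k = 0 then 0 else c (k - 1) * V))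
          = t ^ k • (if k ≤ n then c k * H else 0)
            + t ^ k • (if k = 0 then 0 else c (k - 1) * V) := fun k _ => smul_add _ _ _
    rw [Finset.sum_congr rfl step2, Finset.sum_add_distrib]
    congr 1
    · rw [Finset.sum_range_succ (fun k => t ^ k • (if k ≤ n then c k * H else 0)),
        if_neg (Nat.not_succ_le_self n), smul_zero, add_zero]
      exact Finset.sum_congr rfl fun k hk => by
        rw [if_pos (Nat.lt_succ_iff.1 (Finset.mem_range.1 hk))]
    · rw [Finset.sum_range_succ' (fun k => t ^ k • (if k = 0 then 0 else c (k - 1) * V)) (n + 1)]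
      simp

end aux

theorem stmt10 {𝓗 : Type*} [NormedAddCommGroup 𝓗] [InnerProductSpace ℂ 𝓗]
    [FiniteDimensional ℂ 𝓗]
    (H V : 𝓗 →L[ℂ] 𝓗) (hH : IsSelfAdjoint H) (hV : IsSelfAdjoint V) (n : ℕ) :
    LinearMap.trace ℂ 𝓗
        (((H + V) ^ n - ∑ k ∈ Finset.range n,
            ((k.factorial : ℂ)⁻¹) •
              iteratedDeriv k (fun t : ℝ => (H + t • V) ^ n) 0).toLinearMap) =
      LinearMap.trace ℂ 𝓗 ((V ^ n).toLinearMap) := by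
  obtain ⟨c, hc, hrep⟩ := aux_rep H V n
  have hfun : (fun t : ℝ => (H + t • V) ^ n) =
      fun t : ℝ => ∑ k ∈ Finset.range (n + 1), t ^ k • c k := funext hrep
  have key : (H + V) ^ n - ∑ k ∈ Finset.range n,
      ((k.factorial : ℂ)⁻¹) • iteratedDeriv k (fun t : ℝ => (H + t • V) ^ n) 0 = V ^ n := by
    have h1 : (H + V) ^ n = ∑ k ∈ Finset.range (n + 1), c k := by
      have := hrep 1
      simpa using this
    have h2 : ∀ k ∈ Finset.range n,
        ((k.factorial : ℂ)⁻¹) • iteratedDeriv k (fun t : ℝ => (H + t • V) ^ n) 0 = c k := by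
      intro k hk
      rw [hfun, aux_at_zero (n + 1) k (Nat.lt_succ_of_lt (Finset.mem_range.1 hk)) c]
      rw [show ((k.factorial : ℝ)) • c k = ((k.factorial : ℂ)) • c k by
        rw [Nat.cast_smul_eq_nsmul, Nat.cast_smul_eq_nsmul]]
      rw [inv_smul_smul₀ (Nat.cast_ne_zero.2 k.factorial_ne_zero)]
    rw [Finset.sum_congr rfl h2, h1, Finset.sum_range_succ, hc]
    abel
  rw [key]
end
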